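/- arXiv:2107.01859 — 2 statements merged into one kernel-verified Lean document; each statement's English description precedes it below -/
import Mathlib

section
/- Let m ≥ 1 be an integer, 0 < x_1 < ... < x_m, and let p_0, q_0, p_{j,k}, q_{j,k} : (0,∞) → ℂ (j = 1,...,m; k = 1,2,3) be differentiable functions satisfying the system (1.4) and the constraints (1.5). For each fixed r > 0, view H(r; ·) as a function of the 6m+2 complex variables (p_0, q_0, {p_{j,k}, q_{j,k}}). Then for every r > 0, Hamilton's equations hold at the point given by the values of the functions at r: q_0'(r) = ∂H/∂p_0, p_0'(r) = −∂H/∂q_0, and for all j = 1,...,m and k = 1,2,3: q_{j,k}'(r) = ∂H/∂p_{j,k} and p_{j,k}'(r) = −∂H/∂q_{j,k}. In other words, H is a Hamiltonian for the system (1.4)–(1.5). -/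
open Real Complex Filter Topology Finset

noncomputable section

/-- `S_{kl}(r) = ∑_j p_{j,k}(r) q_{j,l}(r)` (indices shifted: `k l : Fin 3` with `0,1,2`
corresponding to `1,2,3` in the paper). -/
def pS {m : ℕ} (p q : Fin m → Fin 3 → ℝ → ℂ) (k l : Fin 3) (r : ℝ) : ℂ :=
  ∑ j, p j k r * q j l r

/-- The system of ODEs (1.4) holding at the point `r`. -/
def PearceySystemAt {m : ℕ} (x : Fin m → ℝ) (p0 q0 : ℝ → ℂ)
    (p q : Fin m → Fin 3 → ℝ → ℂ) (r : ℝ) : Prop :=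
  HasDerivAt p0 (-(Real.sqrt 2 * ∑ j, (x j : ℂ) * p j 2 r * q j 1 r)) r ∧
  HasDerivAt q0 (Real.sqrt 2 * ∑ j, (x j : ℂ) * p j 1 r * q j 0 r) r ∧
  ∀ j : Fin m,
    HasDerivAt (q j 0)
      (2 / r * pS p q 0 0 r * q j 0 r + x j * q j 1 r + 2 / r * pS p q 2 0 r * q j 2 r) r ∧
    HasDerivAt (q j 1)
      (Real.sqrt 2 * p0 r * x j * q j 0 r + 2 / r * pS p q 1 1 r * q j 1 r + x j * q j 2 r) r ∧
    HasDerivAt (q j 2)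
      ((r * x j ^ 2 + 2 / r * pS p q 0 2 r) * q j 0 r + Real.sqrt 2 * q0 r * x j * q j 1 r
        + 2 / r * pS p q 2 2 r * q j 2 r) r ∧
    HasDerivAt (p j 0)
      (-(2 / r * pS p q 0 0 r * p j 0 r) - Real.sqrt 2 * p0 r * x j * p j 1 r
        - (r * x j ^ 2 + 2 / r * pS p q 0 2 r) * p j 2 r) r ∧
    HasDerivAt (p j 1)
      (-(x j * p j 0 r) - 2 / r * pS p q 1 1 r * p j 1 r
        - Real.sqrt 2 * q0 r * x j * p j 2 r) r ∧
    HasDerivAt (p j 2)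
      (-(2 / r * pS p q 2 0 r * p j 0 r) - x j * p j 1 r - 2 / r * pS p q 2 2 r * p j 2 r) r

/-- The constraints (1.5). -/
def PearceyConstraint {m : ℕ} (p q : Fin m → Fin 3 → ℝ → ℂ) : Prop :=
  ∀ r : ℝ, 0 < r → ∀ j : Fin m, ∑ k, p j k r * q j k r = 0

/-- Pointwise `S_{kl}`. -/
def pSpt {m : ℕ} (p q : Fin m → Fin 3 → ℂ) (k l : Fin 3) : ℂ := ∑ j, p j k * q j l

/-- The Hamiltonian (1.7), as a function of `r` and the `6m+2` complex variables. -/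
def pearceyH {m : ℕ} (x : Fin m → ℝ) (r : ℝ) (p0 q0 : ℂ) (p q : Fin m → Fin 3 → ℂ) : ℂ :=
  Real.sqrt 2 * p0 * ∑ j, (x j : ℂ) * p j 1 * q j 0
    + Real.sqrt 2 * q0 * ∑ j, (x j : ℂ) * p j 2 * q j 1
    + ∑ j, (x j : ℂ) * p j 0 * q j 1
    + ∑ j, (x j : ℂ) * p j 1 * q j 2
    + ∑ j, (r : ℂ) * (x j : ℂ) ^ 2 * p j 2 * q j 0
    + 1 / (2 * (r : ℂ)) *
        ((pSpt p q 0 0 - pSpt p q 1 1 + pSpt p q 2 2) ^ 2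
          - 2 * ∑ k, ∑ l, (p k 0 * p l 2 - p k 2 * p l 0) * (q k 0 * q l 2 - q k 2 * q l 0))

/-- The Hamiltonian evaluated along functions of `r`. -/
def pearceyHAlong {m : ℕ} (x : Fin m → ℝ) (p0 q0 : ℝ → ℂ)
    (p q : Fin m → Fin 3 → ℝ → ℂ) (r : ℝ) : ℂ :=
  pearceyH x r (p0 r) (q0 r) (fun j k => p j k r) (fun j k => q j k r)
/-- Replace the `(j,k)` coordinate of a family of complex numbers by `z`. -/
def updC {m : ℕ} (p : Fin m → Fin 3 → ℂ) (j : Fin m) (k : Fin 3) (z : ℂ) :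
    Fin m → Fin 3 → ℂ :=
  fun j' k' => if j' = j ∧ k' = k then z else p j' k'


/-!
Writing `S = pᵀq`, the Hamiltonian has the shape `H = ∑ⱼ pⱼᵀ Bⱼ qⱼ + Q(S) / (2r)` with
`Bⱼ` linear in `p₀, q₀` and `Q` a quadratic form in `S`: the double sum in (1.7) is
`2 (S₁₁ S₃₃ - S₁₃ S₃₁)` by the Cauchy–Binet identity for `2 × 2` minors. Hence
`∂H/∂pⱼ = Cⱼ qⱼ` and `∂H/∂qⱼ = pⱼ Cⱼ` with `Cⱼ = Bⱼ + ∇Q(S) / (2r)`, while (1.4) says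
`qⱼ' = Cⱼ qⱼ` and `pⱼ' = -pⱼ Cⱼ` once the constraints (1.5), i.e. `tr S = 0`, are used to
rewrite `∇Q(S)`.
-/

open Matrix

theorem sum_sum_wedge_mul_wedge {ι R : Type*} [Fintype ι] [CommRing R] (u v w y : ι → R) :
    ∑ k, ∑ l, (u k * v l - v k * u l) * (w k * y l - y k * w l)
      = 2 * ((∑ k, u k * w k) * (∑ k, v k * y k) - (∑ k, u k * y k) * (∑ k, v k * w k)) := by
  have expand : ∀ k l, (u k * v l - v k * u l) * (w k * y l - y k * w l)
      = u k * w k * (v l * y l) - u k * y k * (v l * w l)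
        - v k * w k * (u l * y l) + v k * y k * (u l * w l) := fun k l => by ring
  simp only [expand, sum_add_distrib, sum_sub_distrib, ← sum_mul_sum]
  ring

section CoordinateUpdate

variable {m : ℕ}

theorem updC_self (p : Fin m → Fin 3 → ℂ) (j : Fin m) (k : Fin 3) : updC p j k (p j k) = p := by
  funext i a
  by_cases h : i = j ∧ a = k <;> simp [updC, h]

theorem hasDerivAt_updC_apply (p : Fin m → Fin 3 → ℂ) (j i : Fin m) (k a : Fin 3) (w : ℂ) :
    HasDerivAt (fun z => updC p j k z i a) (if i = j ∧ a = k then 1 else 0) w := by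
  by_cases h : i = j ∧ a = k
  · simpa [updC, h] using hasDerivAt_id' w
  · simpa [updC, h] using hasDerivAt_const w (p i a)

theorem hasDerivAt_sum_updC_mul (p : Fin m → Fin 3 → ℂ) (c : Fin m → ℂ) (j : Fin m)
    (k a : Fin 3) (w : ℂ) :
    HasDerivAt (fun z => ∑ i, updC p j k z i a * c i) (if a = k then c j else 0) w := by
  refine (HasDerivAt.fun_sum fun i (_ : i ∈ univ) =>
    (hasDerivAt_updC_apply p j i k a w).mul_const (c i)).congr_deriv ?_
  by_cases h : a = k <;> simp [h]

theorem hasDerivAt_sum_updC_dotProduct (p v : Fin m → Fin 3 → ℂ) (j : Fin m) (k : Fin 3)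
    (w : ℂ) : HasDerivAt (fun z => ∑ i, updC p j k z i ⬝ᵥ v i) (v j k) w := by
  simp only [dotProduct]
  rw [show (fun z => ∑ i, ∑ a, updC p j k z i a * v i a)
      = fun z => ∑ a, ∑ i, updC p j k z i a * v i a from funext fun _ => sum_comm]
  refine (HasDerivAt.fun_sum fun a (_ : a ∈ univ) =>
    hasDerivAt_sum_updC_mul p (v · a) j k a w).congr_deriv ?_
  simp

theorem pSpt_swap (p q : Fin m → Fin 3 → ℂ) : pSpt q p = fun a b => pSpt p q b a := by
  ext a b
  simp [pSpt, mul_comm]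

end CoordinateUpdate

section BilinearQuadraticHamiltonian

variable {m : ℕ}

def pearceyQuad (S : Fin 3 → Fin 3 → ℂ) : ℂ :=
  (S 0 0 - S 1 1 + S 2 2) ^ 2 - 4 * (S 0 0 * S 2 2 - S 0 2 * S 2 0)

def pearceyQuadGrad (S : Fin 3 → Fin 3 → ℂ) : Matrix (Fin 3) (Fin 3) ℂ :=
  !![2 * (S 0 0 - S 1 1 + S 2 2) - 4 * S 2 2, 0, 4 * S 2 0;
    0, -(2 * (S 0 0 - S 1 1 + S 2 2)), 0;
    4 * S 0 2, 0, 2 * (S 0 0 - S 1 1 + S 2 2) - 4 * S 0 0]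

theorem pearceyQuad_swap (S : Fin 3 → Fin 3 → ℂ) :
    pearceyQuad (fun a b => S b a) = pearceyQuad S := by
  unfold pearceyQuad
  ring

theorem pearceyQuadGrad_swap (S : Fin 3 → Fin 3 → ℂ) :
    pearceyQuadGrad (fun a b => S b a) = (pearceyQuadGrad S)ᵀ := by
  ext a b
  fin_cases a <;> fin_cases b <;> simp [pearceyQuadGrad]

theorem hasDerivAt_pearceyQuad {S : ℂ → Fin 3 → Fin 3 → ℂ} {S' : Fin 3 → Fin 3 → ℂ} {w : ℂ}
    (hS : ∀ a b, HasDerivAt (fun z => S z a b) (S' a b) w) :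
    HasDerivAt (fun z => pearceyQuad (S z))
      (∑ a, ∑ b, pearceyQuadGrad (S w) a b * S' a b) w := by
  have htrace := ((hS 0 0).sub (hS 1 1)).add (hS 2 2)
  have hdet := ((hS 0 0).mul (hS 2 2)).sub ((hS 0 2).mul (hS 2 0))
  refine ((htrace.pow 2).sub (hdet.const_mul 4)).congr_deriv ?_
  simp [pearceyQuadGrad, Fin.sum_univ_three]
  ring

def bilinQuadHam (B : Fin m → Matrix (Fin 3) (Fin 3) ℂ) (c : ℂ) (p q : Fin m → Fin 3 → ℂ) :
    ℂ :=
  ∑ i, p i ⬝ᵥ (B i *ᵥ q i) + c * pearceyQuad (pSpt p q)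

theorem bilinQuadHam_swap (B : Fin m → Matrix (Fin 3) (Fin 3) ℂ) (c : ℂ)
    (p q : Fin m → Fin 3 → ℂ) :
    bilinQuadHam B c p q = bilinQuadHam (fun i => (B i)ᵀ) c q p := by
  simp only [bilinQuadHam, pSpt_swap p q, pearceyQuad_swap, dotProduct_mulVec,
    vecMul_transpose, dotProduct_comm]

theorem hasDerivAt_bilinQuadHam_updC_left (B : Fin m → Matrix (Fin 3) (Fin 3) ℂ) (c : ℂ)
    (p q : Fin m → Fin 3 → ℂ) (j : Fin m) (k : Fin 3) :
    HasDerivAt (fun z => bilinQuadHam B c (updC p j k z) q)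
      (((B j + c • pearceyQuadGrad (pSpt p q)) *ᵥ q j) k) (p j k) := by
  have hS (a b : Fin 3) : HasDerivAt (fun z => pSpt (updC p j k z) q a b)
      (if a = k then q j b else 0) (p j k) :=
    hasDerivAt_sum_updC_mul p (q · b) j k a (p j k)
  have hQ := hasDerivAt_pearceyQuad hS
  rw [updC_self] at hQ
  refine ((hasDerivAt_sum_updC_dotProduct p (fun i => B i *ᵥ q i) j k (p j k)).add
    (hQ.const_mul c)).congr_deriv ?_
  simp [mulVec, dotProduct, add_mul, sum_add_distrib, mul_sum, mul_assoc]

theorem hasDerivAt_bilinQuadHam_updC_right (B : Fin m → Matrix (Fin 3) (Fin 3) ℂ) (c : ℂ)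
    (p q : Fin m → Fin 3 → ℂ) (j : Fin m) (k : Fin 3) :
    HasDerivAt (fun z => bilinQuadHam B c p (updC q j k z))
      ((p j ᵥ* (B j + c • pearceyQuadGrad (pSpt p q))) k) (q j k) := by
  simp only [bilinQuadHam_swap B c p]
  convert hasDerivAt_bilinQuadHam_updC_left (fun i => (B i)ᵀ) c q p j k using 2
  rw [pSpt_swap p q, pearceyQuadGrad_swap (pSpt p q), ← transpose_smul, ← transpose_add,
    mulVec_transpose]

end BilinearQuadraticHamiltonian

section Pearcey

variable {m : ℕ}

def pearceyLinMatrix (x : Fin m → ℝ) (r : ℝ) (p0 q0 : ℂ) (j : Fin m) :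
    Matrix (Fin 3) (Fin 3) ℂ :=
  !![0, x j, 0;
    Real.sqrt 2 * p0 * x j, 0, x j;
    r * x j ^ 2, Real.sqrt 2 * q0 * x j, 0]

theorem pearceyH_eq_bilinQuadHam (x : Fin m → ℝ) (r : ℝ) (p0 q0 : ℂ)
    (p q : Fin m → Fin 3 → ℂ) :
    pearceyH x r p0 q0 p q = bilinQuadHam (pearceyLinMatrix x r p0 q0) (1 / (2 * r)) p q := by
  have hlin : ∑ i, p i ⬝ᵥ (pearceyLinMatrix x r p0 q0 i *ᵥ q i)
      = Real.sqrt 2 * p0 * ∑ j, (x j : ℂ) * p j 1 * q j 0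
        + Real.sqrt 2 * q0 * ∑ j, (x j : ℂ) * p j 2 * q j 1
        + ∑ j, (x j : ℂ) * p j 0 * q j 1
        + ∑ j, (x j : ℂ) * p j 1 * q j 2
        + ∑ j, (r : ℂ) * (x j : ℂ) ^ 2 * p j 2 * q j 0 := by
    simp only [mul_sum, ← sum_add_distrib]
    refine sum_congr rfl fun i _ => ?_
    simp [pearceyLinMatrix, dotProduct, mulVec, Fin.sum_univ_three]
    ring
  rw [pearceyH, sum_sum_wedge_mul_wedge, bilinQuadHam, hlin, pearceyQuad]
  simp only [pSpt]
  ring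

theorem hasDerivAt_pearceyH_p0 (x : Fin m → ℝ) (r : ℝ) (p0 q0 : ℂ) (p q : Fin m → Fin 3 → ℂ) :
    HasDerivAt (fun z => pearceyH x r z q0 p q)
      (Real.sqrt 2 * ∑ j, (x j : ℂ) * p j 1 * q j 0) p0 := by
  unfold pearceyH
  refine (((((((hasDerivAt_id' p0).const_mul _).mul_const _).add_const _).add_const _).add_const
    _).add_const _).add_const _ |>.congr_deriv ?_
  ring

theorem hasDerivAt_pearceyH_q0 (x : Fin m → ℝ) (r : ℝ) (p0 q0 : ℂ) (p q : Fin m → Fin 3 → ℂ) :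
    HasDerivAt (fun z => pearceyH x r p0 z p q)
      (Real.sqrt 2 * ∑ j, (x j : ℂ) * p j 2 * q j 1) q0 := by
  unfold pearceyH
  refine ((((((((hasDerivAt_id' q0).const_mul _).mul_const _).const_add _).add_const _).add_const
    _).add_const _).add_const _).congr_deriv ?_
  ring

def pearceyCoeff (x : Fin m → ℝ) (r : ℝ) (p0 q0 : ℂ) (p q : Fin m → Fin 3 → ℂ) (j : Fin m) :
    Matrix (Fin 3) (Fin 3) ℂ :=
  pearceyLinMatrix x r p0 q0 j + (1 / (2 * r) : ℂ) • pearceyQuadGrad (pSpt p q)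

theorem hasDerivAt_pearceyH_updC_p (x : Fin m → ℝ) (r : ℝ) (p0 q0 : ℂ)
    (p q : Fin m → Fin 3 → ℂ) (j : Fin m) (k : Fin 3) :
    HasDerivAt (fun z => pearceyH x r p0 q0 (updC p j k z) q)
      ((pearceyCoeff x r p0 q0 p q j *ᵥ q j) k) (p j k) := by
  simp only [pearceyH_eq_bilinQuadHam]
  exact hasDerivAt_bilinQuadHam_updC_left _ _ p q j k

theorem hasDerivAt_pearceyH_updC_q (x : Fin m → ℝ) (r : ℝ) (p0 q0 : ℂ)
    (p q : Fin m → Fin 3 → ℂ) (j : Fin m) (k : Fin 3) :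
    HasDerivAt (fun z => pearceyH x r p0 q0 p (updC q j k z))
      ((p j ᵥ* pearceyCoeff x r p0 q0 p q j) k) (q j k) := by
  simp only [pearceyH_eq_bilinQuadHam]
  exact hasDerivAt_bilinQuadHam_updC_right _ _ p q j k

theorem PearceyConstraint.trace_pS_eq_zero {p q : Fin m → Fin 3 → ℝ → ℂ}
    (hcon : PearceyConstraint p q) {r : ℝ} (hr : 0 < r) :
    pS p q 0 0 r + pS p q 1 1 r + pS p q 2 2 r = 0 := by
  simp only [pS, ← sum_add_distrib]
  exact sum_eq_zero fun j _ => by simpa [Fin.sum_univ_three] using hcon r hr j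

section System

variable {x : Fin m → ℝ} {p0 q0 : ℝ → ℂ} {p q : Fin m → Fin 3 → ℝ → ℂ} {r : ℝ}

theorem PearceySystemAt.hasDerivAt_q (hsys : PearceySystemAt x p0 q0 p q r)
    (htr : pS p q 0 0 r + pS p q 1 1 r + pS p q 2 2 r = 0) (j : Fin m) (k : Fin 3) :
    HasDerivAt (q j k) ((pearceyCoeff x r (p0 r) (q0 r) (fun j k => p j k r)
      (fun j k => q j k r) j *ᵥ fun l => q j l r) k) r := by
  obtain ⟨h0, h1, h2, -, -, -⟩ := hsys.2.2 j
  have htr' := mul_eq_zero_of_right (q j k r / r) htr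
  simp only [pS] at htr'
  fin_cases k <;>
    [refine h0.congr_deriv ?_; refine h1.congr_deriv ?_; refine h2.congr_deriv ?_] <;>
    simp only [Fin.zero_eta, Fin.mk_one, Fin.reduceFinMk, Fin.isValue] at htr' <;>
    simp [pearceyCoeff, pearceyLinMatrix, pearceyQuadGrad, mulVec, dotProduct,
      Fin.sum_univ_three, pS, pSpt] <;>
    linear_combination htr'

theorem PearceySystemAt.hasDerivAt_p (hsys : PearceySystemAt x p0 q0 p q r)
    (htr : pS p q 0 0 r + pS p q 1 1 r + pS p q 2 2 r = 0) (j : Fin m) (k : Fin 3) :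
    HasDerivAt (p j k) (-((fun l => p j l r) ᵥ* pearceyCoeff x r (p0 r) (q0 r)
      (fun j k => p j k r) (fun j k => q j k r) j) k) r := by
  obtain ⟨-, -, -, h0, h1, h2⟩ := hsys.2.2 j
  have htr' := mul_eq_zero_of_right (p j k r / r) htr
  simp only [pS] at htr'
  fin_cases k <;>
    [refine h0.congr_deriv ?_; refine h1.congr_deriv ?_; refine h2.congr_deriv ?_] <;>
    simp only [Fin.zero_eta, Fin.mk_one, Fin.reduceFinMk, Fin.isValue] at htr' <;>
    simp [pearceyCoeff, pearceyLinMatrix, pearceyQuadGrad, vecMul, dotProduct,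
      Fin.sum_univ_three, pS, pSpt] <;>
    linear_combination -htr'

end System

end Pearcey

theorem pearcey_H_is_hamiltonian_general
    (m : ℕ) (x : Fin m → ℝ)
    (p0 q0 : ℝ → ℂ) (p q : Fin m → Fin 3 → ℝ → ℂ)
    (hsys : ∀ r : ℝ, 0 < r → PearceySystemAt x p0 q0 p q r)
    (hcon : PearceyConstraint p q) :
    ∀ r : ℝ, 0 < r →
      -- q₀'(r) = ∂H/∂p₀
      HasDerivAt (fun z : ℂ =>
          pearceyH x r z (q0 r) (fun j k => p j k r) (fun j k => q j k r))
        (deriv q0 r) (p0 r) ∧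
      -- p₀'(r) = −∂H/∂q₀
      HasDerivAt (fun z : ℂ =>
          pearceyH x r (p0 r) z (fun j k => p j k r) (fun j k => q j k r))
        (-deriv p0 r) (q0 r) ∧
      ∀ (j : Fin m) (k : Fin 3),
        -- q_{j,k}'(r) = ∂H/∂p_{j,k}
        HasDerivAt (fun z : ℂ =>
            pearceyH x r (p0 r) (q0 r) (updC (fun j' k' => p j' k' r) j k z)
              (fun j' k' => q j' k' r))
          (deriv (q j k) r) (p j k r) ∧
        -- p_{j,k}'(r) = −∂H/∂q_{j,k}
        HasDerivAt (fun z : ℂ =>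
            pearceyH x r (p0 r) (q0 r) (fun j' k' => p j' k' r)
              (updC (fun j' k' => q j' k' r) j k z))
          (-deriv (p j k) r) (q j k r) := by
  intro r hr
  have hsysr := hsys r hr
  have htr := hcon.trace_pS_eq_zero hr
  refine ⟨?_, ?_, fun j k => ⟨?_, ?_⟩⟩
  · rw [hsysr.2.1.deriv]
    exact hasDerivAt_pearceyH_p0 ..
  · rw [hsysr.1.deriv, neg_neg]
    exact hasDerivAt_pearceyH_q0 ..
  · rw [(hsysr.hasDerivAt_q htr j k).deriv]
    exact hasDerivAt_pearceyH_updC_p ..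
  · rw [(hsysr.hasDerivAt_p htr j k).deriv, neg_neg]
    exact hasDerivAt_pearceyH_updC_q ..

theorem pearcey_H_is_hamiltonian
    (m : ℕ) (hm : 1 ≤ m) (x : Fin m → ℝ)
    (hxpos : ∀ j, 0 < x j) (hxmono : StrictMono x)
    (p0 q0 : ℝ → ℂ) (p q : Fin m → Fin 3 → ℝ → ℂ)
    (hsys : ∀ r : ℝ, 0 < r → PearceySystemAt x p0 q0 p q r)
    (hcon : PearceyConstraint p q) :
    ∀ r : ℝ, 0 < r →
      -- q₀'(r) = ∂H/∂p₀
      HasDerivAt (fun z : ℂ =>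
          pearceyH x r z (q0 r) (fun j k => p j k r) (fun j k => q j k r))
        (deriv q0 r) (p0 r) ∧
      -- p₀'(r) = −∂H/∂q₀
      HasDerivAt (fun z : ℂ =>
          pearceyH x r (p0 r) z (fun j k => p j k r) (fun j k => q j k r))
        (-deriv p0 r) (q0 r) ∧
      ∀ (j : Fin m) (k : Fin 3),
        -- q_{j,k}'(r) = ∂H/∂p_{j,k}
        HasDerivAt (fun z : ℂ =>
            pearceyH x r (p0 r) (q0 r) (updC (fun j' k' => p j' k' r) j k z)
              (fun j' k' => q j' k' r))
          (deriv (q j k) r) (p j k r) ∧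
        -- p_{j,k}'(r) = −∂H/∂q_{j,k}
        HasDerivAt (fun z : ℂ =>
            pearceyH x r (p0 r) (q0 r) (fun j' k' => p j' k' r)
              (updC (fun j' k' => q j' k' r) j k z))
          (-deriv (p j k) r) (q j k r) :=
  pearcey_H_is_hamiltonian_general m x p0 q0 p q hsys hcon
end
end

section
/- Let m ≥ 1 be an integer, 0 < x_1 < ... < x_m, and let p_0, q_0, p_{j,k}, q_{j,k} : (0,∞) → ℂ (j = 1,...,m; k = 1,2,3) be differentiable functions satisfying the system (1.4) and the constraints (1.5). Let 𝓗(r) denote the Hamiltonian H evaluated along these functions. Then the function r ↦ 2 p_0(r) q_0(r) + Σ_{j=1}^m [ p_{j,2}(r) q_{j,2}(r) + 2 p_{j,3}(r) q_{j,3}(r) ] − 3 r 𝓗(r) is differentiable on (0,∞), and for every r > 0: p_0(r) q_0'(r) + Σ_{j=1}^m Σ_{k=1}^3 p_{j,k}(r) q_{j,k}'(r) − 𝓗(r) = 𝓗(r) + (1/4) d/dr [ 2 p_0(r) q_0(r) + Σ_{j=1}^m ( p_{j,2}(r) q_{j,2}(r) + 2 p_{j,3}(r) q_{j,3}(r) )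 − 3 r 𝓗(r) ]. -/
open Real Complex Filter Topology Finset

noncomputable section

/-! On the constraint surface `S₁₁ + S₂₂ + S₃₃ = 0` the Hamiltonian splits as `H = L + Q / r`.
Here (1.4) reads `q_j' = (A_j + (2/r) M) q_j`, `p_j' = -(A_j + (2/r) M)ᵀ p_j`, with `A_j` free of
the `S_{kl}` and `M = (S₁₁, 0, S₃₁; 0, S₂₂, 0; S₁₃, 0, S₃₃)`, and `L = ∑ⱼ p_jᵀ A_j q_j`,
`Q = ∑ⱼ p_jᵀ M q_j`; hence `∑ p q' = L + 2Q/r`. As the system is Hamiltonian, `rH` changes only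
through its explicit dependence on `r`: `(rH)' = L + r ∑ⱼ x_j² p_{j,3} q_{j,1}`. In the derivatives
of `S₂₂` and `S₃₃` the coupling terms cancel, and what is left is a linear identity between the
sums `∑ⱼ x_jⁿ p_{j,k} q_{j,l}`. -/

namespace Pearcey

variable {m : ℕ} {x : Fin m → ℝ} {p0 q0 : ℝ → ℂ} {p q : Fin m → Fin 3 → ℝ → ℂ} {r : ℝ}

/-- `L = ∑ⱼ p_jᵀ A_j q_j`. -/
def linPart (x : Fin m → ℝ) (p0 q0 : ℝ → ℂ) (p q : Fin m → Fin 3 → ℝ → ℂ) (r : ℝ) : ℂ :=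
  ∑ j, (√2 * p0 r * x j * p j 1 r * q j 0 r + √2 * q0 r * x j * p j 2 r * q j 1 r
    + x j * p j 0 r * q j 1 r + x j * p j 1 r * q j 2 r + r * x j ^ 2 * p j 2 r * q j 0 r)

/-- `Q = ∑ⱼ p_jᵀ M q_j`. -/
def quadPart (p q : Fin m → Fin 3 → ℝ → ℂ) (r : ℝ) : ℂ :=
  pS p q 0 0 r ^ 2 + pS p q 1 1 r ^ 2 + pS p q 2 2 r ^ 2 + 2 * pS p q 0 2 r * pS p q 2 0 r

theorem pearceyHAlong_eq (h : ∑ j, ∑ k, p j k r * q j k r = 0) :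
    pearceyHAlong x p0 q0 p q r = linPart x p0 q0 p q r + quadPart p q r / r := by
  have htrace : pS p q 0 0 r + pS p q 1 1 r + pS p q 2 2 r = 0 := by
    simpa only [pS, Fin.sum_univ_three, sum_add_distrib] using h
  have hdet : ∑ k, ∑ l, (p k 0 r * p l 2 r - p k 2 r * p l 0 r)
        * (q k 0 r * q l 2 r - q k 2 r * q l 0 r)
      = pS p q 0 0 r * pS p q 2 2 r - pS p q 0 2 r * pS p q 2 0 r
        - pS p q 2 0 r * pS p q 0 2 r + pS p q 2 2 r * pS p q 0 0 r := by
    simp only [pS, sum_mul_sum, ← sum_sub_distrib, ← sum_add_distrib]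
    exact sum_congr rfl fun k _ => sum_congr rfl fun l _ => by ring
  have hlin : linPart x p0 q0 p q r = √2 * p0 r * ∑ j, (x j : ℂ) * p j 1 r * q j 0 r
      + √2 * q0 r * ∑ j, (x j : ℂ) * p j 2 r * q j 1 r + ∑ j, (x j : ℂ) * p j 0 r * q j 1 r
      + ∑ j, (x j : ℂ) * p j 1 r * q j 2 r + ∑ j, (r : ℂ) * (x j : ℂ) ^ 2 * p j 2 r * q j 0 r := by
    simp only [linPart, mul_sum, ← sum_add_distrib]
    exact sum_congr rfl fun j _ => by ring
  have hpSpt : ∀ k l, pSpt (fun j k => p j k r) (fun j k => q j k r) k l = pS p q k l r :=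
    fun _ _ => rfl
  rw [pearceyHAlong, pearceyH, hdet, hlin, quadPart, hpSpt, hpSpt, hpSpt]
  linear_combination -(pS p q 0 0 r + pS p q 1 1 r + pS p q 2 2 r) / (2 * r) * htrace

/-- The coupling terms `(2/r) S_{kl}` of (1.4) contribute to `S_{ab}'` through sums of this shape,
which is why they drop out of the derivatives of the block entries `S₁₁, S₁₃, S₂₂, S₃₁, S₃₃`. -/
theorem sum_pS_mul_sub_pS_mul (a b c d : Fin 3) :
    ∑ j, (pS p q c d r * (p j a r * q j b r) - pS p q a b r * (p j c r * q j d r)) = 0 := by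
  simp only [sum_sub_distrib, ← mul_sum]
  unfold pS
  ring

theorem hasDerivAt_pS_00 (hs : PearceySystemAt x p0 q0 p q r) :
    HasDerivAt (pS p q 0 0) (∑ j, (x j * p j 0 r * q j 1 r - √2 * p0 r * x j * p j 1 r * q j 0 r
      - r * x j ^ 2 * p j 2 r * q j 0 r)) r := by
  obtain ⟨-, -, hpq⟩ := hs
  refine (HasDerivAt.fun_sum fun j (_ : j ∈ univ) => (hpq j).2.2.2.1.mul (hpq j).1).congr_deriv ?_
  rw [← sub_eq_zero, ← sum_sub_distrib]
  calc _ = 2 / r * ∑ j,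
        (pS p q 2 0 r * (p j 0 r * q j 2 r) - pS p q 0 2 r * (p j 2 r * q j 0 r)) := by
        rw [mul_sum]; exact sum_congr rfl fun j _ => by ring
    _ = 0 := by rw [sum_pS_mul_sub_pS_mul, mul_zero]

theorem hasDerivAt_pS_11 (hs : PearceySystemAt x p0 q0 p q r) :
    HasDerivAt (pS p q 1 1) (∑ j, (√2 * p0 r * x j * p j 1 r * q j 0 r - x j * p j 0 r * q j 1 r
      - √2 * q0 r * x j * p j 2 r * q j 1 r + x j * p j 1 r * q j 2 r)) r := by
  obtain ⟨-, -, hpq⟩ := hs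
  refine (HasDerivAt.fun_sum fun j (_ : j ∈ univ) =>
    (hpq j).2.2.2.2.1.mul (hpq j).2.1).congr_deriv (sum_congr rfl fun j _ => by ring)

theorem hasDerivAt_pS_22 (hs : PearceySystemAt x p0 q0 p q r) :
    HasDerivAt (pS p q 2 2) (∑ j, (√2 * q0 r * x j * p j 2 r * q j 1 r - x j * p j 1 r * q j 2 r
      + r * x j ^ 2 * p j 2 r * q j 0 r)) r := by
  obtain ⟨-, -, hpq⟩ := hs
  refine (HasDerivAt.fun_sum fun j (_ : j ∈ univ) =>
    (hpq j).2.2.2.2.2.mul (hpq j).2.2.1).congr_deriv ?_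
  rw [← sub_eq_zero, ← sum_sub_distrib]
  calc _ = 2 / r * ∑ j,
        (pS p q 0 2 r * (p j 2 r * q j 0 r) - pS p q 2 0 r * (p j 0 r * q j 2 r)) := by
        rw [mul_sum]; exact sum_congr rfl fun j _ => by ring
    _ = 0 := by rw [sum_pS_mul_sub_pS_mul, mul_zero]

theorem hasDerivAt_pS_02 (hs : PearceySystemAt x p0 q0 p q r) :
    HasDerivAt (pS p q 0 2) (∑ j, (√2 * q0 r * x j * p j 0 r * q j 1 r
      - √2 * p0 r * x j * p j 1 r * q j 2 r + r * x j ^ 2 * p j 0 r * q j 0 r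
      - r * x j ^ 2 * p j 2 r * q j 2 r)) r := by
  obtain ⟨-, -, hpq⟩ := hs
  refine (HasDerivAt.fun_sum fun j (_ : j ∈ univ) =>
    (hpq j).2.2.2.1.mul (hpq j).2.2.1).congr_deriv ?_
  rw [← sub_eq_zero, ← sum_sub_distrib]
  calc _ = 2 / r * (∑ j, (pS p q 0 2 r * (p j 0 r * q j 0 r) - pS p q 0 0 r * (p j 0 r * q j 2 r))
        + ∑ j, (pS p q 2 2 r * (p j 0 r * q j 2 r) - pS p q 0 2 r * (p j 2 r * q j 2 r))) := by
        rw [← sum_add_distrib, mul_sum]; exact sum_congr rfl fun j _ => by ring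
    _ = 0 := by rw [sum_pS_mul_sub_pS_mul, sum_pS_mul_sub_pS_mul, add_zero, mul_zero]

theorem hasDerivAt_pS_20 (hs : PearceySystemAt x p0 q0 p q r) :
    HasDerivAt (pS p q 2 0) (∑ j, (x j * p j 2 r * q j 1 r - x j * p j 1 r * q j 0 r)) r := by
  obtain ⟨-, -, hpq⟩ := hs
  refine (HasDerivAt.fun_sum fun j (_ : j ∈ univ) =>
    (hpq j).2.2.2.2.2.mul (hpq j).1).congr_deriv ?_
  rw [← sub_eq_zero, ← sum_sub_distrib]
  calc _ = 2 / r * (∑ j, (pS p q 0 0 r * (p j 2 r * q j 0 r) - pS p q 2 0 r * (p j 0 r * q j 0 r))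
        + ∑ j, (pS p q 2 0 r * (p j 2 r * q j 2 r) - pS p q 2 2 r * (p j 2 r * q j 0 r))) := by
        rw [← sum_add_distrib, mul_sum]; exact sum_congr rfl fun j _ => by ring
    _ = 0 := by rw [sum_pS_mul_sub_pS_mul, sum_pS_mul_sub_pS_mul, add_zero, mul_zero]

theorem hasDerivAt_mul_pearceyHAlong (hr : 0 < r) (hs : PearceySystemAt x p0 q0 p q r)
    (hcon : PearceyConstraint p q) :
    HasDerivAt (fun r' : ℝ => r' * pearceyHAlong x p0 q0 p q r')
      (linPart x p0 q0 p q r + r * ∑ j, (x j : ℂ) ^ 2 * p j 2 r * q j 0 r) r := by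
  have hS00 := hasDerivAt_pS_00 hs
  have hS11 := hasDerivAt_pS_11 hs
  have hS22 := hasDerivAt_pS_22 hs
  have hS02 := hasDerivAt_pS_02 hs
  have hS20 := hasDerivAt_pS_20 hs
  obtain ⟨hp0, hq0, hpq⟩ := hs
  set dp0 := -(√2 * ∑ j, (x j : ℂ) * p j 2 r * q j 1 r) with hdp0
  set dq0 := √2 * ∑ j, (x j : ℂ) * p j 1 r * q j 0 r with hdq0
  have hid : HasDerivAt (fun r' : ℝ => (r' : ℂ)) 1 r := (hasDerivAt_id r).ofReal_comp
  have hlin : HasDerivAt (linPart x p0 q0 p q) _ r := HasDerivAt.fun_sum fun j (_ : j ∈ univ) => by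
    obtain ⟨hq₀, hq₁, hq₂, hp₀, hp₁, hp₂⟩ := hpq j
    exact (((((((hp0.const_mul (√2 : ℂ)).mul_const (x j : ℂ)).fun_mul hp₁).fun_mul hq₀).fun_add
      ((((hq0.const_mul (√2 : ℂ)).mul_const (x j : ℂ)).fun_mul hp₂).fun_mul hq₁)).fun_add
      ((hp₀.const_mul (x j : ℂ)).fun_mul hq₁)).fun_add
      ((hp₁.const_mul (x j : ℂ)).fun_mul hq₂)).fun_add
      (((hid.mul_const ((x j : ℂ) ^ 2)).fun_mul hp₂).fun_mul hq₀)
  have hquad : HasDerivAt (quadPart p q) _ r :=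
    (((hS00.fun_pow 2).fun_add (hS11.fun_pow 2)).fun_add (hS22.fun_pow 2)).fun_add
      ((hS02.const_mul 2).fun_mul hS20)
  refine (((hid.fun_mul hlin).fun_add hquad).congr_of_eventuallyEq ?_).congr_deriv ?_
  · filter_upwards [lt_mem_nhds hr] with r' hr'
    have hr'0 : (r' : ℂ) ≠ 0 := by exact_mod_cast hr'.ne'
    rw [pearceyHAlong_eq (sum_eq_zero fun j _ => hcon r' hr' j), mul_add, mul_div_cancel₀ _ hr'0]
  · have hr0 : (r : ℂ) ≠ 0 := by exact_mod_cast hr.ne'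
    have hcancel : ∑ j, (√2 * dp0 * (x j * p j 1 r * q j 0 r)
        + √2 * dq0 * (x j * p j 2 r * q j 1 r)) = 0 := by
      rw [sum_add_distrib, ← mul_sum, ← mul_sum, hdp0, hdq0]
      ring
    calc _ = linPart x p0 q0 p q r + ∑ j, (r * (x j ^ 2 * p j 2 r * q j 0 r)
          + r * (√2 * dp0 * (x j * p j 1 r * q j 0 r) + √2 * dq0 * (x j * p j 2 r * q j 1 r))) := by
          rw [one_mul, add_assoc]
          congr 1
          simp only [mul_sum, sum_mul, ← sum_add_distrib]
          refine sum_congr rfl fun j _ => ?_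
          field_simp
          ring
      _ = _ := by rw [sum_add_distrib, ← mul_sum, ← mul_sum, hcancel, mul_zero, add_zero]

theorem sum_mul_deriv_eq (hs : PearceySystemAt x p0 q0 p q r) :
    ∑ j, ∑ k, p j k r * deriv (q j k) r = linPart x p0 q0 p q r + 2 * quadPart p q r / r := by
  obtain ⟨-, -, hpq⟩ := hs
  have hquad : quadPart p q r = ∑ j, (pS p q 0 0 r * (p j 0 r * q j 0 r)
      + pS p q 1 1 r * (p j 1 r * q j 1 r) + pS p q 2 2 r * (p j 2 r * q j 2 r)
      + pS p q 2 0 r * (p j 0 r * q j 2 r) + pS p q 0 2 r * (p j 2 r * q j 0 r)) := by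
    simp only [sum_add_distrib, ← mul_sum]
    unfold quadPart pS
    ring
  rw [hquad, linPart, mul_sum, sum_div, ← sum_add_distrib]
  refine sum_congr rfl fun j _ => ?_
  obtain ⟨hq₀, hq₁, hq₂, -, -, -⟩ := hpq j
  rw [Fin.sum_univ_three, hq₀.deriv, hq₁.deriv, hq₂.deriv]
  ring

theorem hasDerivAt_magical_combination (hr : 0 < r) (hs : PearceySystemAt x p0 q0 p q r)
    (hcon : PearceyConstraint p q) :
    HasDerivAt (fun r' : ℝ => 2 * p0 r' * q0 r'
        + (∑ j, (p j 1 r' * q j 1 r' + 2 * p j 2 r' * q j 2 r'))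
        - 3 * r' * pearceyHAlong x p0 q0 p q r')
      (4 * (p0 r * deriv q0 r + (∑ j, ∑ k, p j k r * deriv (q j k) r)
        - 2 * pearceyHAlong x p0 q0 p q r)) r := by
  have hS := (hasDerivAt_pS_11 hs).fun_add ((hasDerivAt_pS_22 hs).const_mul 2)
  have hrH := hasDerivAt_mul_pearceyHAlong hr hs hcon
  rw [sum_mul_deriv_eq hs, pearceyHAlong_eq (sum_eq_zero fun j _ => hcon r hr j)]
  obtain ⟨hp0, hq0, -⟩ := hs
  rw [hq0.deriv]
  have hF := (((hp0.const_mul 2).fun_mul hq0).fun_add hS).fun_sub (hrH.const_mul 3)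
  refine (hF.congr_of_eventuallyEq (Eventually.of_forall fun r' => ?_)).congr_deriv ?_
  · simp only [pS, sum_add_distrib, mul_sum, mul_assoc]
  · have key : 2 * (-(√2 * ∑ j, (x j : ℂ) * p j 2 r * q j 1 r)) * q0 r
        - 2 * p0 r * (√2 * ∑ j, (x j : ℂ) * p j 1 r * q j 0 r)
        + (∑ j, (√2 * p0 r * x j * p j 1 r * q j 0 r - x j * p j 0 r * q j 1 r
          - √2 * q0 r * x j * p j 2 r * q j 1 r + x j * p j 1 r * q j 2 r)
        + 2 * ∑ j, (√2 * q0 r * x j * p j 2 r * q j 1 r - x j * p j 1 r * q j 2 r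
          + r * x j ^ 2 * p j 2 r * q j 0 r))
        - 3 * r * ∑ j, (x j : ℂ) ^ 2 * p j 2 r * q j 0 r + linPart x p0 q0 p q r = 0 := by
      simp only [linPart, mul_sum, sum_mul, ← sum_neg_distrib, ← sum_add_distrib, ← sum_sub_distrib]
      exact sum_eq_zero fun j _ => by ring
    linear_combination key

end Pearcey

theorem pearcey_magical_identity_general
    (m : ℕ) (x : Fin m → ℝ)
    (p0 q0 : ℝ → ℂ) (p q : Fin m → Fin 3 → ℝ → ℂ)
    (hsys : ∀ r : ℝ, 0 < r → PearceySystemAt x p0 q0 p q r)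
    (hcon : PearceyConstraint p q) :
    (∀ r : ℝ, 0 < r → DifferentiableAt ℝ
      (fun r' : ℝ => 2 * p0 r' * q0 r'
        + (∑ j, (p j 1 r' * q j 1 r' + 2 * p j 2 r' * q j 2 r'))
        - 3 * r' * pearceyHAlong x p0 q0 p q r') r) ∧
    ∀ r : ℝ, 0 < r →
      p0 r * deriv q0 r + (∑ j, ∑ k, p j k r * deriv (q j k) r)
          - pearceyHAlong x p0 q0 p q r
        = pearceyHAlong x p0 q0 p q r
          + 1 / 4 * deriv (fun r' : ℝ => 2 * p0 r' * q0 r'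
              + (∑ j, (p j 1 r' * q j 1 r' + 2 * p j 2 r' * q j 2 r'))
              - 3 * r' * pearceyHAlong x p0 q0 p q r') r := by
  refine ⟨fun r hr =>
    (Pearcey.hasDerivAt_magical_combination hr (hsys r hr) hcon).differentiableAt, fun r hr => ?_⟩
  rw [(Pearcey.hasDerivAt_magical_combination hr (hsys r hr) hcon).deriv]
  ring

theorem pearcey_magical_identity
    (m : ℕ) (hm : 1 ≤ m) (x : Fin m → ℝ)
    (hxpos : ∀ j, 0 < x j) (hxmono : StrictMono x)
    (p0 q0 : ℝ → ℂ) (p q : Fin m → Fin 3 → ℝ → ℂ)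
    (hsys : ∀ r : ℝ, 0 < r → PearceySystemAt x p0 q0 p q r)
    (hcon : PearceyConstraint p q) :
    (∀ r : ℝ, 0 < r → DifferentiableAt ℝ
      (fun r' : ℝ => 2 * p0 r' * q0 r'
        + (∑ j, (p j 1 r' * q j 1 r' + 2 * p j 2 r' * q j 2 r'))
        - 3 * r' * pearceyHAlong x p0 q0 p q r') r) ∧
    ∀ r : ℝ, 0 < r →
      p0 r * deriv q0 r + (∑ j, ∑ k, p j k r * deriv (q j k) r)
          - pearceyHAlong x p0 q0 p q r
        = pearceyHAlong x p0 q0 p q r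
          + 1 / 4 * deriv (fun r' : ℝ => 2 * p0 r' * q0 r'
              + (∑ j, (p j 1 r' * q j 1 r' + 2 * p j 2 r' * q j 2 r'))
              - 3 * r' * pearceyHAlong x p0 q0 p q r') r :=
  pearcey_magical_identity_general m x p0 q0 p q hsys hcon
end
end
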